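/- For every k ≥ 2 there exists a constant c_k > 0 such that every connected graph G on n vertices satisfies P(G,k) ≥ c_k·(log n)^{k-1}, where P(G,k) counts the unordered k-tuples (m₁ ≥ m₂ ≥ ⋯ ≥ m_k ≥ 1) with Σ m_i = e(G) realizable by a partition of E(G) into k disjoint parts of these sizes, each inducing a connected subgraph. -/

import Mathlib

/-- An edge set `E` induces a connected subgraph: the graph on the endpoint of edges of
`E` whose edges are exactly `E` is connected. -/
def EdgeConn {V : Type*} (E : Set (Sym2 V)) : Prop :=
  ((SimpleGraph.fromEdgeSet E).induce (SimpleGraph.fromEdgeSet E).support).Connected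

/-- The set of unordered `k`-tuples (encoded as weakly decreasing tuples) of positive
integers realizable as the part sizes of a partition of `E(G)` into `k` parts, each
inducing a connected subgraph. -/
def kEdgeTuples {V : Type*} (G : SimpleGraph V) (k : ℕ) : Set (Fin k → ℕ) :=
  {m | (∀ i, 1 ≤ m i) ∧ (∀ i j : Fin k, i ≤ j → m j ≤ m i) ∧
    ∃ E : Fin k → Set (Sym2 V), (⋃ i, E i) = G.edgeSet ∧
      (Pairwise fun i j => Disjoint (E i) (E j)) ∧
      ∀ i, EdgeConn (E i) ∧ (E i).ncard = m i}

/-- `P G k`: the number of unordered `k`-tuples realizable by connected edge partitions. -/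
noncomputable def P {V : Type*} (G : SimpleGraph V) (k : ℕ) : ℕ := (kEdgeTuples G k).ncard

/-!
Remove the root `r` of a connected vertex set `S`. Either `S - r` is still connected, or some
component `C` of `S - r` has at most `|S|/2` vertices. Cut off the edges at `r` (in the first case)
or the edges meeting `C` (in the second), and recurse on `S - r` rooted at a neighbour of `r`, or on
`S - C` rooted at `r`. This gives a chain `E(G) = F₀ ⊋ F₁ ⊋ ⋯ ⊋ F_D = ∅` in which every
`F_i \ F_j` is connected and `n ≤ 2^D`. Any `k - 1` intermediate terms of the chain cut `E(G)` into
`k` connected pieces. Since the sizes `|F_i|` strictly decrease, different choices give different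
ordered size vectors, so `C(D-1, k-1) ≤ k! · P(G,k)`. Together with `P(G,k) ≥ 1` (grow a connected
edge set one edge at a time), this gives `P(G,k) ≥ c_k D^(k-1) ≥ c_k (log n)^(k-1)`.
-/

open SimpleGraph

section

variable {V : Type*}

/-! ### Connected edge sets -/

theorem SimpleGraph.connected_induce_support_iff (H : SimpleGraph V) :
    (H.induce H.support).Connected ↔
      H.support.Nonempty ∧ ∀ u ∈ H.support, ∀ v ∈ H.support, H.Reachable u v := by
  rw [connected_iff, Set.nonempty_coe_sort]
  refine ⟨fun h => ⟨h.2, fun u hu v hv => ?_⟩, fun h => ⟨fun ⟨a, ha⟩ ⟨b, hb⟩ => ?_, h.1⟩⟩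
  · exact (h.1 ⟨u, hu⟩ ⟨v, hv⟩).map (Embedding.induce _).toHom
  · obtain ⟨p⟩ := h.2 a ha b hb
    have hp : ∀ w ∈ p.support, w ∈ H.support := by
      intro w hw
      by_cases hnil : p.Nil
      · rw [Walk.nil_iff_support_eq.mp hnil, List.mem_singleton] at hw
        exact hw ▸ ha
      · exact mem_support_of_mem_walk_support p hnil hw
    exact ⟨p.induce _ hp⟩

theorem edgeConn_iff {E : Set (Sym2 V)} :
    EdgeConn E ↔ (fromEdgeSet E).support.Nonempty ∧
      ∀ u ∈ (fromEdgeSet E).support, ∀ v ∈ (fromEdgeSet E).support,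
        (fromEdgeSet E).Reachable u v :=
  connected_induce_support_iff _

theorem mem_support_fromEdgeSet {E : Set (Sym2 V)} {a b : V} (h : s(a, b) ∈ E) (hab : a ≠ b) :
    a ∈ (fromEdgeSet E).support :=
  ⟨b, (fromEdgeSet_adj _).2 ⟨h, hab⟩⟩

theorem support_fromEdgeSet_mono {A B : Set (Sym2 V)} (h : A ⊆ B) :
    (fromEdgeSet A).support ⊆ (fromEdgeSet B).support :=
  support_mono (fromEdgeSet_mono h)

theorem edgeConn_of_forall_reachable {E : Set (Sym2 V)} {c : V}
    (hc : c ∈ (fromEdgeSet E).support)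
    (h : ∀ v ∈ (fromEdgeSet E).support, (fromEdgeSet E).Reachable v c) : EdgeConn E :=
  edgeConn_iff.2 ⟨⟨c, hc⟩, fun u hu v hv => (h u hu).trans (h v hv).symm⟩

theorem EdgeConn.nonempty {E : Set (Sym2 V)} (h : EdgeConn E) : E.Nonempty := by
  obtain ⟨⟨v, w, hvw⟩, -⟩ := edgeConn_iff.1 h
  exact ⟨s(v, w), (fromEdgeSet_adj _).1 hvw |>.1⟩

theorem EdgeConn.union {A B : Set (Sym2 V)} (hA : EdgeConn A) (hB : EdgeConn B) {v : V}
    (hvA : v ∈ (fromEdgeSet A).support) (hvB : v ∈ (fromEdgeSet B).support) :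
    EdgeConn (A ∪ B) := by
  have hA' := (edgeConn_iff.1 hA).2
  have hB' := (edgeConn_iff.1 hB).2
  refine edgeConn_of_forall_reachable (support_fromEdgeSet_mono Set.subset_union_left hvA)
    fun u hu => ?_
  obtain ⟨w, huw⟩ := hu
  obtain ⟨huw | huw, hne⟩ := (fromEdgeSet_adj _).1 huw
  · exact (hA' u (mem_support_fromEdgeSet huw hne) v hvA).mono
      (fromEdgeSet_mono Set.subset_union_left)
  · exact (hB' u (mem_support_fromEdgeSet huw hne) v hvB).mono
      (fromEdgeSet_mono Set.subset_union_right)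

theorem edgeConn_singleton {e : Sym2 V} (he : ¬ e.IsDiag) : EdgeConn {e} := by
  induction e with
  | _ a b =>
    have hab : a ≠ b := fun h => he (Sym2.mk_isDiag_iff.2 h)
    have hadj : (fromEdgeSet {s(a, b)}).Adj a b := (fromEdgeSet_adj _).2 ⟨rfl, hab⟩
    refine edgeConn_of_forall_reachable (c := a) ⟨b, hadj⟩ fun v ⟨w, hvw⟩ => ?_
    obtain ⟨hvw, hne⟩ := (fromEdgeSet_adj _).1 hvw
    rcases Sym2.eq_iff.1 (Set.mem_singleton_iff.1 hvw) with ⟨rfl, -⟩ | ⟨rfl, -⟩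
    · rfl
    · exact hadj.symm.reachable

theorem reachable_fromEdgeSet_of_walk {G : SimpleGraph V} {E : Set (Sym2 V)} {u v : V}
    (p : G.Walk u v) (hp : ∀ e ∈ p.edges, e ∈ E) : (fromEdgeSet E).Reachable u v :=
  ⟨p.transfer _ fun e he => by
    rw [edgeSet_fromEdgeSet]
    exact ⟨hp e he, G.not_isDiag_of_mem_edgeSet (p.edges_subset_edgeSet he)⟩⟩

theorem EdgeConn.exists_insert {A E : Set (Sym2 V)} (hA : EdgeConn A) (hE : EdgeConn E)
    (hdiag : ∀ e ∈ E, ¬ e.IsDiag) (hAE : A ⊂ E) : ∃ e ∈ E, e ∉ A ∧ EdgeConn (insert e A) := by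
  have hins : ∀ {x y}, s(x, y) ∈ E → x ∈ (fromEdgeSet A).support →
      EdgeConn (insert s(x, y) A) := by
    intro x y hxy hx
    have hd := hdiag _ hxy
    rw [Set.insert_eq]
    exact (edgeConn_singleton hd).union hA
      (mem_support_fromEdgeSet rfl fun h => hd (Sym2.mk_isDiag_iff.2 h)) hx
  obtain ⟨f, hfE, hfA⟩ := Set.exists_of_ssubset hAE
  obtain ⟨a, ha⟩ := (edgeConn_iff.1 hA).1
  induction f with
  | _ x y =>
    by_cases hx : x ∈ (fromEdgeSet A).support
    · exact ⟨_, hfE, hfA, hins hfE hx⟩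
    -- a walk in `E` from `A` to `x` leaves the vertices of `A` along an edge outside `A`
    obtain ⟨p⟩ := (edgeConn_iff.1 hE).2 a (support_fromEdgeSet_mono hAE.1 ha) x
      (mem_support_fromEdgeSet hfE fun h => hdiag _ hfE (Sym2.mk_isDiag_iff.2 h))
    obtain ⟨d, -, hdA, hdA'⟩ := p.exists_boundary_dart _ ha hx
    obtain ⟨hdE, hne⟩ := (fromEdgeSet_adj _).1 d.adj
    exact ⟨_, hdE, fun h => hdA' (mem_support_fromEdgeSet (Sym2.eq_swap ▸ h) hne.symm),
      hins hdE hdA⟩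

theorem EdgeConn.exists_subset_ncard_eq {E : Set (Sym2 V)} (hE : EdgeConn E)
    (hdiag : ∀ e ∈ E, ¬ e.IsDiag) (hfin : E.Finite) {j : ℕ} (hj : 1 ≤ j) (hjE : j ≤ E.ncard) :
    ∃ A ⊆ E, EdgeConn A ∧ A.ncard = j := by
  induction j, hj using Nat.le_induction with
  | base =>
    obtain ⟨e, he⟩ := hE.nonempty
    exact ⟨{e}, Set.singleton_subset_iff.2 he, edgeConn_singleton (hdiag e he),
      Set.ncard_singleton e⟩
  | succ j hj ih =>
    obtain ⟨A, hAE, hA, rfl⟩ := ih (by omega)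
    have hAE' : A ⊂ E := hAE.ssubset_of_ne (by rintro rfl; omega)
    obtain ⟨e, heE, heA, he⟩ := hA.exists_insert hE hdiag hAE'
    exact ⟨insert e A, Set.insert_subset heE hAE, he,
      Set.ncard_insert_of_notMem heA (hfin.subset hAE)⟩

theorem EdgeConn.exists_edgeConn_sdiff_singleton {E : Set (Sym2 V)} (hE : EdgeConn E)
    (hdiag : ∀ e ∈ E, ¬ e.IsDiag) (hfin : E.Finite) (h2 : 2 ≤ E.ncard) :
    ∃ e ∈ E, EdgeConn (E \ {e}) := by
  obtain ⟨A, hAE, hA, hcard⟩ := hE.exists_subset_ncard_eq hdiag hfin (j := E.ncard - 1)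
    (by omega) (by omega)
  obtain ⟨e, he⟩ := Set.ncard_eq_one.1 (show (E \ A).ncard = 1 by
    rw [Set.ncard_sdiff hAE (hfin.subset hAE)]; omega)
  have heE : e ∈ E := (he ▸ Set.mem_singleton e : e ∈ E \ A).1
  refine ⟨e, heE, ?_⟩
  rwa [← he, Set.sdiff_sdiff_cancel_left hAE]

theorem SimpleGraph.Connected.edgeConn_edgeSet {G : SimpleGraph V} (hG : G.Connected)
    (hE : G.edgeSet.Nonempty) : EdgeConn G.edgeSet := by
  rw [edgeConn_iff, fromEdgeSet_edgeSet]
  obtain ⟨e, he⟩ := hE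
  induction e with
  | _ a b => exact ⟨⟨a, b, he⟩, fun u _ v _ => hG.preconnected u v⟩

/-! ### Size vectors of connected partitions -/

def connSizeTuples (E : Set (Sym2 V)) (k : ℕ) : Set (Fin k → ℕ) :=
  {m | ∃ A : Fin k → Set (Sym2 V), (⋃ i, A i) = E ∧ Pairwise (fun i j => Disjoint (A i) (A j)) ∧
    ∀ i, EdgeConn (A i) ∧ (A i).ncard = m i}

theorem mem_connSizeTuples_empty_zero (m : Fin 0 → ℕ) : m ∈ connSizeTuples (∅ : Set (Sym2 V)) 0 :=
  ⟨Fin.elim0, by simp, fun i => i.elim0, fun i => i.elim0⟩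

theorem cons_mem_connSizeTuples {E E' : Set (Sym2 V)} {k : ℕ} {m : Fin k → ℕ}
    (hm : m ∈ connSizeTuples E' k) (hE' : E' ⊆ E) (hdiff : EdgeConn (E \ E')) :
    Fin.cons (E \ E').ncard m ∈ connSizeTuples E (k + 1) := by
  obtain ⟨A, hcover, hdisj, hA⟩ := hm
  have hAE' : ∀ i, A i ⊆ E' := fun i => hcover ▸ Set.subset_iUnion A i
  refine ⟨Fin.cons (E \ E') A, ?_, ?_, fun i => ?_⟩
  · ext e
    simp only [Set.mem_iUnion, Fin.exists_fin_succ, Fin.cons_zero, Fin.cons_succ]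
    rw [← Set.mem_iUnion, hcover]
    constructor
    · rintro (h | h)
      exacts [h.1, hE' h]
    · intro h
      by_cases h' : e ∈ E'
      exacts [Or.inr h', Or.inl ⟨h, h'⟩]
  · intro i j hij
    induction i using Fin.cases <;> induction j using Fin.cases
    · exact absurd rfl hij
    · exact Set.disjoint_sdiff_left.mono_right (hAE' _)
    · exact Set.disjoint_sdiff_left.mono_right (hAE' _) |>.symm
    · exact hdisj fun h => hij (congrArg Fin.succ h)
  · induction i using Fin.cases
    · exact ⟨hdiff, rfl⟩
    · exact hA _

theorem connSizeTuples_finite {E : Set (Sym2 V)} (hE : E.Finite) (k : ℕ) :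
    (connSizeTuples E k).Finite := by
  refine (Set.Finite.pi (t := fun _ => Set.Iic E.ncard) fun _ => Set.finite_Iic _).subset ?_
  rintro m ⟨A, hcover, -, hA⟩ i -
  rw [Set.mem_Iic, ← (hA i).2]
  exact Set.ncard_le_ncard (hcover ▸ Set.subset_iUnion A i) hE

theorem connSizeTuples_nonempty {E : Set (Sym2 V)} (hE : EdgeConn E)
    (hdiag : ∀ e ∈ E, ¬ e.IsDiag) (hfin : E.Finite) {k : ℕ} (hk : 1 ≤ k) (hkE : k ≤ E.ncard) :
    (connSizeTuples E k).Nonempty := by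
  induction k, hk using Nat.le_induction generalizing E with
  | base =>
    refine ⟨_, cons_mem_connSizeTuples (mem_connSizeTuples_empty_zero Fin.elim0)
      (Set.empty_subset E) ?_⟩
    rwa [Set.sdiff_empty]
  | succ k hk ih =>
    obtain ⟨e, heE, he⟩ := hE.exists_edgeConn_sdiff_singleton hdiag hfin (by omega)
    have hcard : (E \ {e}).ncard = E.ncard - 1 := Set.ncard_sdiff_singleton_of_mem heE
    obtain ⟨m, hm⟩ := ih he (fun f hf => hdiag f hf.1) hfin.sdiff (by omega)
    refine ⟨_, cons_mem_connSizeTuples hm Set.sdiff_subset ?_⟩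
    rw [Set.sdiff_sdiff_cancel_left (Set.singleton_subset_iff.2 heE)]
    exact edgeConn_singleton (hdiag e heE)

open Nat in
theorem ncard_connSizeTuples_le [Finite V] (G : SimpleGraph V) (k : ℕ) :
    (connSizeTuples G.edgeSet k).ncard ≤ k ! * P G k := by
  have hsub : kEdgeTuples G k ⊆ connSizeTuples G.edgeSet k := fun _ ⟨_, _, h⟩ => h
  have hfin : (kEdgeTuples G k ×ˢ (Set.univ : Set (Equiv.Perm (Fin k)))).Finite :=
    ((connSizeTuples_finite (Set.toFinite _) k).subset hsub).prod Set.finite_univ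
  have key : connSizeTuples G.edgeSet k ⊆
      (fun p : (Fin k → ℕ) × Equiv.Perm (Fin k) => p.1 ∘ p.2.symm) ''
        (kEdgeTuples G k ×ˢ Set.univ) := by
    rintro m ⟨A, hcover, hdisj, hA⟩
    set σ := Tuple.sort (OrderDual.toDual ∘ m)
    have hanti : ∀ i j, i ≤ j → m (σ j) ≤ m (σ i) := fun i j hij =>
      OrderDual.toDual_le_toDual.1 (Tuple.monotone_sort _ hij)
    refine ⟨(m ∘ σ, σ), ⟨⟨fun i => ?_, hanti, A ∘ σ, ?_, fun i j hij => hdisj (σ.injective.ne hij),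
      fun i => hA (σ i)⟩, trivial⟩, ?_⟩
    · rw [show (m ∘ σ, σ).1 i = m (σ i) from rfl, ← (hA (σ i)).2]
      exact (Set.ncard_pos (Set.toFinite _)).2 (hA (σ i)).1.nonempty
    · rw [← hcover]
      exact σ.surjective.iUnion_comp A
    · funext i
      simp
  calc (connSizeTuples G.edgeSet k).ncard
      ≤ (kEdgeTuples G k ×ˢ (Set.univ : Set (Equiv.Perm (Fin k)))).ncard :=
        (Set.ncard_le_ncard key (hfin.image _)).trans (Set.ncard_image_le hfin)
    _ = k ! * P G k := by
        rw [Set.ncard_prod, Set.ncard_univ, Nat.card_perm, Nat.card_eq_fintype_card,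
          Fintype.card_fin, P, mul_comm]

/-! ### Connected chains -/

def EdgeConnDiff (A B : Set (Sym2 V)) : Prop := B ⊆ A ∧ EdgeConn (A \ B)

theorem EdgeConnDiff.ssubset {A B : Set (Sym2 V)} (h : EdgeConnDiff A B) : B ⊂ A :=
  ⟨h.1, fun hAB => (Set.sdiff_nonempty.1 h.2.nonempty) hAB⟩

noncomputable def pieceSizes {α : Type*} (c : List (Set α)) (k : ℕ) : Fin k → ℕ :=
  fun t => (c.getD t ∅).ncard - (c.getD (t + 1) ∅).ncard

theorem pieceSizes_cons {α : Type*} (A : Set α) (c : List (Set α)) (k : ℕ) :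
    pieceSizes (A :: c) (k + 1) = Fin.cons (A.ncard - (c.getD 0 ∅).ncard) (pieceSizes c k) := by
  ext t
  induction t using Fin.cases <;> rfl

theorem pieceSizes_mem_connSizeTuples [Finite V] :
    ∀ (k : ℕ) (c : List (Set (Sym2 V))), c.length = k + 1 → c.IsChain EdgeConnDiff →
      c.getLast? = some ∅ → pieceSizes c k ∈ connSizeTuples (c.getD 0 ∅) k
  | 0, [A], _, _, hlast => by
    obtain rfl : A = ∅ := by simpa using hlast
    exact mem_connSizeTuples_empty_zero _
  | k + 1, A :: B :: c, hlen, hchain, hlast => by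
    rw [List.isChain_cons_cons] at hchain
    have ih := pieceSizes_mem_connSizeTuples k (B :: c) (by simpa using hlen) hchain.2
      (by simpa using hlast)
    simp only [List.getD_cons_zero] at ih ⊢
    rw [pieceSizes_cons, List.getD_cons_zero, ← Set.ncard_sdiff hchain.1.1]
    exact cons_mem_connSizeTuples ih hchain.1.1 hchain.1.2

theorem eq_of_pieceSizes_eq {α : Type*} [Finite α] {l : List (Set α)}
    (hinj : Set.InjOn Set.ncard {A | A ∈ l}) :
    ∀ (k : ℕ) (c c' : List (Set α)), c.Sublist l → c'.Sublist l → c.length = k + 1 →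
      c'.length = k + 1 → c.IsChain (· ⊇ ·) → c'.IsChain (· ⊇ ·) → c.head? = c'.head? →
      pieceSizes c k = pieceSizes c' k → c = c'
  | 0, [A], [A'], _, _, _, _, _, _, hhead, _ => by simpa using hhead
  | k + 1, A :: B :: c, A' :: B' :: c', hc, hc', hlen, hlen', hch, hch', hhead, hsizes => by
    obtain rfl : A = A' := by simpa using hhead
    rw [List.isChain_cons_cons] at hch hch'
    rw [pieceSizes_cons, pieceSizes_cons, Fin.cons_inj] at hsizes
    have hBB' : B = B' := by
      refine hinj (hc.subset (by simp)) (hc'.subset (by simp)) ?_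
      have := Set.ncard_le_ncard hch.1
      have := Set.ncard_le_ncard hch'.1
      simp only [List.getD_cons_zero] at hsizes
      omega
    subst hBB'
    rw [eq_of_pieceSizes_eq hinj k (B :: c) (B :: c') ((List.sublist_cons_self _ _).trans hc)
      ((List.sublist_cons_self _ _).trans hc') (by simpa using hlen) (by simpa using hlen')
      hch.2 hch'.2 rfl hsizes.2]

theorem choose_le_ncard_connSizeTuples [Finite V] {E : Set (Sym2 V)} {L : List (Set (Sym2 V))}
    (hpw : (E :: L).Pairwise EdgeConnDiff) (hlast : (E :: L).getLast? = some ∅) {k : ℕ}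
    (hk : 1 ≤ k) (hkL : k ≤ L.length) :
    (L.length - 1).choose (k - 1) ≤ (connSizeTuples E k).ncard := by
  classical
  have hL : L ≠ [] := by rintro rfl; simp at hkL; omega
  have hsplit : L = L.dropLast ++ [∅] := by
    rw [List.getLast?_cons, List.getLast?_eq_some_getLast hL] at hlast
    conv_lhs => rw [← List.dropLast_append_getLast hL]
    simpa using hlast
  set mid := L.dropLast
  have hnd : ((E :: L).map Set.ncard).Nodup :=
    List.Pairwise.nodup (r := (· > ·)) <| List.pairwise_map.2 <|
      hpw.imp fun {A B} h => show B.ncard < A.ncard from Set.ncard_lt_ncard h.ssubset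
  have hsub : ∀ s ∈ mid.sublistsLen (k - 1), (E :: (s ++ [∅])).Sublist (E :: L) := by
    intro s hs
    rw [hsplit]
    exact ((List.mem_sublistsLen.1 hs).1.append_right _).cons_cons E
  have hlen : ∀ s ∈ mid.sublistsLen (k - 1), (E :: (s ++ [∅])).length = k + 1 := by
    intro s hs
    simp [(List.mem_sublistsLen.1 hs).2]
    omega
  have hmid : mid.length = L.length - 1 := List.length_dropLast
  calc (L.length - 1).choose (k - 1)
      = {s | s ∈ mid.sublistsLen (k - 1)}.ncard := by
        rw [← List.coe_toFinset, Set.ncard_coe_finset, List.toFinset_card_of_nodup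
          (List.nodup_sublistsLen _ (hnd.of_map _ |>.sublist
            ((List.dropLast_sublist L).trans (List.sublist_cons_self E L)))),
          List.length_sublistsLen, hmid]
    _ ≤ (connSizeTuples E k).ncard := by
        refine Set.ncard_le_ncard_of_injOn (fun s => pieceSizes (E :: (s ++ [∅])) k)
          (fun s hs => ?_) (fun s hs s' hs' h => ?_) (connSizeTuples_finite (Set.toFinite E) k)
        · exact pieceSizes_mem_connSizeTuples k _ (hlen s hs) ((hpw.sublist (hsub s hs)).isChain)
            (by rw [List.getLast?_cons, List.getLast?_append]; rfl)
        · have := eq_of_pieceSizes_eq (List.inj_on_of_nodup_map hnd) k _ _ (hsub s hs)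
            (hsub s' hs') (hlen s hs) (hlen s' hs')
            ((hpw.sublist (hsub s hs)).isChain.imp fun _ _ h => h.1)
            ((hpw.sublist (hsub s' hs')).isChain.imp fun _ _ h => h.1) rfl h
          simpa using this

/-- `E :: L` is a chain `E = F₀ ⊃ F₁ ⊃ ⋯ ⊃ F_D = ∅` in which every difference `F_i \ F_j`
(`i < j`) is connected and every `F₀ \ F_j` contains the root `r`. -/
def IsConnChain (E : Set (Sym2 V)) (r : V) (L : List (Set (Sym2 V))) : Prop :=
  (E :: L).Pairwise EdgeConnDiff ∧ (E :: L).getLast? = some ∅ ∧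
    ∀ B ∈ L, r ∈ (fromEdgeSet (E \ B)).support

theorem isConnChain_nil (r : V) : IsConnChain (∅ : Set (Sym2 V)) r [] :=
  ⟨List.pairwise_singleton _ _, rfl, by simp⟩

theorem IsConnChain.cons {E E' : Set (Sym2 V)} {r r' : V} {L : List (Set (Sym2 V))}
    (hL : IsConnChain E' r' L) (hE : EdgeConnDiff E E') (hr : r ∈ (fromEdgeSet (E \ E')).support)
    (hr' : r' ∈ (fromEdgeSet (E \ E')).support) : IsConnChain E r (E' :: L) := by
  obtain ⟨hpw, hlast, hroot⟩ := hL
  have hsub : ∀ B ∈ E' :: L, B ⊆ E' := by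
    intro B hB
    rcases List.mem_cons.1 hB with rfl | hB
    exacts [subset_rfl, (List.rel_of_pairwise_cons hpw hB).1]
  refine ⟨List.pairwise_cons.2 ⟨fun B hB => ⟨(hsub B hB).trans hE.1, ?_⟩, hpw⟩,
    by rwa [List.getLast?_cons_cons], fun B hB =>
      support_fromEdgeSet_mono (Set.sdiff_subset_sdiff_right (hsub B hB)) hr⟩
  rcases List.mem_cons.1 hB with rfl | hB
  · exact hE.2
  · rw [← Set.sdiff_union_sdiff_cancel hE.1 (hsub B (List.mem_cons_of_mem _ hB))]
    exact hE.2.union (List.rel_of_pairwise_cons hpw hB).2 hr' (hroot B hB)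

/-! ### A long connected chain in a connected graph -/

namespace SimpleGraph

variable {G : SimpleGraph V} {S U : Set V} {r : V}

theorem exists_walk_of_connected_induce (hS : (G.induce S).Connected) {x y : V} (hx : x ∈ S)
    (hy : y ∈ S) : ∃ p : G.Walk x y, ∀ v ∈ p.support, v ∈ S := by
  obtain ⟨p⟩ := hS.preconnected ⟨x, hx⟩ ⟨y, hy⟩
  refine ⟨p.map (Embedding.induce S).toHom, fun v hv => ?_⟩
  obtain ⟨w, -, rfl⟩ := List.mem_map.1 (Walk.support_map _ p ▸ hv)
  exact w.2

theorem connected_induce_of_forall_walk {c : V} (hc : c ∈ U)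
    (h : ∀ y ∈ U, ∃ p : G.Walk y c, ∀ v ∈ p.support, v ∈ U) : (G.induce U).Connected := by
  refine (connected_iff_exists_forall_reachable _).2 ⟨⟨c, hc⟩, fun ⟨y, hy⟩ => ?_⟩
  obtain ⟨p, hp⟩ := h y hy
  exact ⟨(p.induce U hp).reverse⟩

theorem exists_walk_of_closed (hS : (G.induce S).Connected) (hrU : r ∈ U) (hUS : U ⊆ S)
    (hU : ∀ x ∈ U, x ≠ r → ∀ y ∈ S, G.Adj x y → y ∈ U) {y : V} (hy : y ∈ U) :
    ∃ p : G.Walk y r, ∀ v ∈ p.support, v ∈ U := by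
  obtain ⟨p, hp⟩ := exists_walk_of_connected_induce hS (hUS hy) (hUS hrU)
  induction p with
  | nil => exact ⟨Walk.nil, by simpa⟩
  | @cons y y' z hadj p ih =>
    by_cases hyz : y = z
    · subst hyz
      exact ⟨Walk.nil, by simpa⟩
    have hy' : y' ∈ U := hU y hy hyz y' (hp y' (by simp)) hadj
    obtain ⟨q, hq⟩ := ih hrU hU hy' (fun v hv => hp v (List.mem_cons_of_mem _ hv))
    exact ⟨Walk.cons hadj q, by simpa [hy] using hq⟩

def edgesIn (G : SimpleGraph V) (S : Set V) : Set (Sym2 V) := G.edgeSet ∩ S.sym2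

@[simp]
theorem mk_mem_edgesIn {a b : V} : s(a, b) ∈ G.edgesIn S ↔ G.Adj a b ∧ a ∈ S ∧ b ∈ S :=
  Iff.rfl

theorem edgesIn_mono {S S' : Set V} (h : S ⊆ S') : G.edgesIn S ⊆ G.edgesIn S' :=
  Set.inter_subset_inter_right _ fun _ he => Set.mem_sym2_iff_subset.2
    ((Set.mem_sym2_iff_subset.1 he).trans h)

theorem edgesIn_univ (G : SimpleGraph V) : G.edgesIn Set.univ = G.edgeSet := by
  simp [edgesIn]

theorem edgeConn_edgesIn_sdiff_of_closed (hS : (G.induce S).Connected) (hr : r ∈ S) {C : Set V}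
    (hCS : C ⊆ S \ {r}) (hC : ∀ x ∈ C, ∀ y ∈ S, G.Adj x y → y = r ∨ y ∈ C) (hne : C.Nonempty) :
    EdgeConn (G.edgesIn S \ G.edgesIn (S \ C)) ∧
      r ∈ (fromEdgeSet (G.edgesIn S \ G.edgesIn (S \ C))).support := by
  have hreach : ∀ x ∈ C, (fromEdgeSet (G.edgesIn S \ G.edgesIn (S \ C))).Reachable x r := by
    intro x hx
    obtain ⟨p, hp⟩ := exists_walk_of_closed hS (Set.mem_insert r C)
      (Set.insert_subset hr (hCS.trans Set.sdiff_subset))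
      (fun x hx hxr => (hC x (Set.mem_of_mem_insert_of_ne hx hxr) · · ·))
      (Set.mem_insert_of_mem r hx)
    refine reachable_fromEdgeSet_of_walk p fun e he => ?_
    induction e with
    | _ a b =>
      have hab := p.adj_of_mem_edges he
      have ha := hp a (p.fst_mem_support_of_mem_edges he)
      have hb := hp b (p.snd_mem_support_of_mem_edges he)
      have haS := Set.insert_subset hr (hCS.trans Set.sdiff_subset) ha
      have hbS := Set.insert_subset hr (hCS.trans Set.sdiff_subset) hb
      refine ⟨mk_mem_edgesIn.2 ⟨hab, haS, hbS⟩, fun h => ?_⟩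
      obtain ⟨-, ⟨-, haC⟩, ⟨-, hbC⟩⟩ := mk_mem_edgesIn.1 h
      rcases ha with rfl | ha
      · rcases hb with rfl | hb
        exacts [hab.ne rfl, hbC hb]
      · exact haC ha
  obtain ⟨c, hc⟩ := hne
  have hrsupp := mem_support_of_reachable (fun h => (hCS hc).2 h.symm) (hreach c hc).symm
  refine ⟨edgeConn_of_forall_reachable hrsupp fun v ⟨w, hvw⟩ => ?_, hrsupp⟩
  obtain ⟨⟨hvw, hvwS⟩, hne⟩ := (fromEdgeSet_adj _).1 hvw
  obtain ⟨hadj, hvS, hwS⟩ := mk_mem_edgesIn.1 hvw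
  by_cases hv : v ∈ C
  · exact hreach v hv
  have hw : w ∈ C := by
    by_contra hw
    exact hvwS (mk_mem_edgesIn.2 ⟨hadj, ⟨hvS, hv⟩, ⟨hwS, hw⟩⟩)
  rcases hC w hw v hvS hadj.symm with rfl | h
  exacts [Reachable.refl _, absurd h hv]

theorem edgeConn_edgesIn_sdiff_singleton (hr : r ∈ S) {r' : V} (hr' : r' ∈ S) (hadj : G.Adj r r') :
    EdgeConn (G.edgesIn S \ G.edgesIn (S \ {r})) ∧
      r ∈ (fromEdgeSet (G.edgesIn S \ G.edgesIn (S \ {r}))).support ∧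
      r' ∈ (fromEdgeSet (G.edgesIn S \ G.edgesIn (S \ {r}))).support := by
  have hrr' : s(r, r') ∈ G.edgesIn S \ G.edgesIn (S \ {r}) :=
    ⟨mk_mem_edgesIn.2 ⟨hadj, hr, hr'⟩, fun h => (mk_mem_edgesIn.1 h).2.1.2 rfl⟩
  have hrsupp := mem_support_fromEdgeSet hrr' hadj.ne
  refine ⟨edgeConn_of_forall_reachable hrsupp fun v ⟨w, hvw⟩ => ?_, hrsupp,
    mem_support_fromEdgeSet (Sym2.eq_swap ▸ hrr') hadj.ne.symm⟩
  obtain ⟨⟨hvwS, hvwS'⟩, -⟩ := (fromEdgeSet_adj _).1 hvw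
  obtain ⟨hadj, hvS, hwS⟩ := mk_mem_edgesIn.1 hvwS
  by_cases hv : v = r
  · exact hv ▸ Reachable.refl _
  have hw : w = r := by
    by_contra hw
    exact hvwS' (mk_mem_edgesIn.2 ⟨hadj, ⟨hvS, hv⟩, ⟨hwS, hw⟩⟩)
  exact hvw.reachable.trans (by rw [hw])

theorem connected_induce_sdiff_of_closed (hS : (G.induce S).Connected) (hr : r ∈ S) {C : Set V}
    (hCS : C ⊆ S \ {r}) (hC : ∀ x ∈ C, ∀ y ∈ S, G.Adj x y → y = r ∨ y ∈ C) :
    (G.induce (S \ C)).Connected := by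
  have hrC : r ∉ C := fun h => (hCS h).2 rfl
  have hrSC : r ∈ S \ C := ⟨hr, hrC⟩
  refine connected_induce_of_forall_walk hrSC fun y hy =>
    exists_walk_of_closed hS hrSC Set.sdiff_subset ?_ hy
  intro x ⟨hxS, hxC⟩ hxr y hyS hadj
  refine ⟨hyS, fun hyC => ?_⟩
  rcases hC y hyC x hxS hadj.symm with h | h
  exacts [hxr h, hxC h]

theorem exists_small_closed_of_not_connected [Finite V] (hr : r ∈ S) (hS2 : S.Nontrivial)
    (hT : ¬ (G.induce (S \ {r})).Connected) :
    ∃ C ⊆ S \ {r}, C.Nonempty ∧ 2 * C.ncard ≤ S.ncard ∧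
      ∀ x ∈ C, ∀ y ∈ S, G.Adj x y → y = r ∨ y ∈ C := by
  obtain ⟨t, htS, htr⟩ := hS2.exists_ne r
  have : Nonempty ↥(S \ {r}) := ⟨⟨t, htS, htr⟩⟩
  obtain ⟨a, b, hab⟩ : ∃ a b : ↥(S \ {r}), ¬ (G.induce (S \ {r})).Reachable a b := by
    by_contra! h
    exact hT ⟨h⟩
  let comp : ↥(S \ {r}) → Set V := fun x =>
    Subtype.val '' ((G.induce (S \ {r})).connectedComponentMk x).supp
  have hsub : ∀ x, comp x ⊆ S \ {r} := fun x => Subtype.coe_image_subset _ _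
  have hclosed : ∀ x, ∀ u ∈ comp x, ∀ y ∈ S, G.Adj u y → y = r ∨ y ∈ comp x := by
    rintro x _ ⟨u, hu, rfl⟩ y hyS hadj
    by_cases hyr : y = r
    · exact Or.inl hyr
    have hadj' : (G.induce (S \ {r})).Adj u ⟨y, hyS, hyr⟩ := hadj
    exact Or.inr ⟨⟨y, hyS, hyr⟩, (ConnectedComponent.mem_supp_congr_adj _ hadj').1 hu, rfl⟩
  have hmem : ∀ x, x.1 ∈ comp x := fun x => ⟨x, ConnectedComponent.connectedComponentMk_mem, rfl⟩
  have hdisj : Disjoint (comp a) (comp b) := by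
    rw [Set.disjoint_image_iff Subtype.val_injective]
    exact pairwise_disjoint_supp_connectedComponent _ fun h => hab (ConnectedComponent.eq.1 h)
  have hcard : (comp a).ncard + (comp b).ncard < S.ncard := by
    rw [← Set.ncard_union_eq hdisj]
    calc _ ≤ (S \ {r}).ncard := Set.ncard_le_ncard (Set.union_subset (hsub a) (hsub b))
      _ < S.ncard := Set.ncard_lt_ncard (Set.sdiff_singleton_ssubset.2 hr)
  rcases le_total (comp a).ncard (comp b).ncard with h | h
  · exact ⟨comp a, hsub a, ⟨_, hmem a⟩, by omega, hclosed a⟩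
  · exact ⟨comp b, hsub b, ⟨_, hmem b⟩, by omega, hclosed b⟩

theorem exists_split [Finite V] (hS : (G.induce S).Connected) (hr : r ∈ S)
    (hS2 : S.Nontrivial) :
    ∃ X ⊆ S, ∃ r' ∈ S \ X, X.Nonempty ∧ 2 * X.ncard ≤ S.ncard ∧ (G.induce (S \ X)).Connected ∧
      EdgeConn (G.edgesIn S \ G.edgesIn (S \ X)) ∧
      r ∈ (fromEdgeSet (G.edgesIn S \ G.edgesIn (S \ X))).support ∧
      r' ∈ (fromEdgeSet (G.edgesIn S \ G.edgesIn (S \ X))).support := by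
  by_cases hT : (G.induce (S \ {r})).Connected
  · have : Nontrivial S := Set.nontrivial_coe_sort.2 hS2
    obtain ⟨⟨r', hr'⟩, hadj⟩ := hS.preconnected.exists_adj_of_nontrivial ⟨r, hr⟩
    replace hadj : G.Adj r r' := hadj
    refine ⟨{r}, Set.singleton_subset_iff.2 hr, r', ⟨hr', hadj.ne.symm⟩, Set.singleton_nonempty r,
      ?_, hT, edgeConn_edgesIn_sdiff_singleton hr hr' hadj⟩
    rw [Set.ncard_singleton]
    exact Set.one_lt_ncard_iff_nontrivial.2 hS2
  · obtain ⟨C, hCS, hC, hC2, hCclosed⟩ := exists_small_closed_of_not_connected hr hS2 hT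
    obtain ⟨hδ, hrδ⟩ := edgeConn_edgesIn_sdiff_of_closed hS hr hCS hCclosed hC
    exact ⟨C, hCS.trans Set.sdiff_subset, r, ⟨hr, fun h => (hCS h).2 rfl⟩, hC, hC2,
      connected_induce_sdiff_of_closed hS hr hCS hCclosed, hδ, hrδ, hrδ⟩

theorem exists_isConnChain [Finite V] (hS : (G.induce S).Connected) (hr : r ∈ S) :
    ∃ L, IsConnChain (G.edgesIn S) r L ∧ S.ncard ≤ 2 ^ L.length := by
  induction hn : S.ncard using Nat.strong_induction_on generalizing S r with
  | _ n ih =>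
    subst hn
    rcases S.subsingleton_or_nontrivial with hS1 | hS2
    · have hE : G.edgesIn S = ∅ := by
        refine Set.eq_empty_of_forall_notMem fun e he => ?_
        induction e with
        | _ a b =>
          obtain ⟨hab, ha, hb⟩ := mk_mem_edgesIn.1 he
          exact hab.ne (hS1 ha hb)
      exact ⟨[], hE ▸ isConnChain_nil r, by simpa using Set.ncard_le_one_iff_subsingleton.2 hS1⟩
    obtain ⟨X, hXS, r', hr', hX, hX2, hSX, hδ, hrδ, hr'δ⟩ := exists_split hS hr hS2
    have hcard : (S \ X).ncard = S.ncard - X.ncard := Set.ncard_sdiff hXS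
    have hXpos : 0 < X.ncard := (Set.ncard_pos).2 hX
    obtain ⟨L, hL, hLcard⟩ := ih _ (by omega) hSX hr' rfl
    refine ⟨_, hL.cons ⟨edgesIn_mono Set.sdiff_subset, hδ⟩ hrδ hr'δ, ?_⟩
    rw [List.length_cons, pow_succ]
    omega

end SimpleGraph

/-! ### The bound -/

theorem one_le_P [Finite V] {G : SimpleGraph V} (hG : G.Connected) {k : ℕ} (hk : 1 ≤ k)
    (hkE : k ≤ G.edgeSet.ncard) : 1 ≤ P G k := by
  have hne := connSizeTuples_nonempty
    (hG.edgeConn_edgeSet (Set.nonempty_of_ncard_ne_zero (by omega)))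
    (fun _ he => G.not_isDiag_of_mem_edgeSet he) (Set.toFinite _) hk hkE
  have hpos := (Set.ncard_pos (connSizeTuples_finite (Set.toFinite _) k)).2 hne
  have hle := ncard_connSizeTuples_le G k
  refine Nat.pos_of_ne_zero fun h => ?_
  rw [h, mul_zero] at hle
  omega

open Nat in
theorem pow_le_of_choose_le {k D p : ℕ} (hk : 1 ≤ k) (hp : 1 ≤ p)
    (h : k ≤ D → (D - 1).choose (k - 1) ≤ k ! * p) :
    D ^ (k - 1) ≤ (2 * k) ^ (k - 1) * ((k - 1)! * k !) * p := by
  set M := max 1 (D + 1 - k)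
  have hDM : D ≤ 2 * k * M := by
    rcases lt_or_ge D k with hDk | hkD
    · calc D ≤ 2 * k * 1 := by omega
        _ ≤ 2 * k * M := Nat.mul_le_mul_left _ (le_max_left _ _)
    · obtain ⟨t, rfl⟩ := Nat.exists_eq_add_of_le hkD
      calc k + t ≤ 2 * k * (k + t + 1 - k) := by
            rw [show k + t + 1 - k = t + 1 by omega]
            nlinarith
        _ ≤ 2 * k * M := Nat.mul_le_mul_left _ (le_max_right _ _)
  have hM : M ^ (k - 1) ≤ (k - 1)! * k ! * p := by
    rcases lt_or_ge D k with hDk | hkD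
    · rw [show M = 1 by simp [M]; omega, one_pow]
      exact Nat.mul_pos (Nat.mul_pos (factorial_pos _) (factorial_pos _)) hp
    · calc M ^ (k - 1) = (D - 1 + 1 - (k - 1)) ^ (k - 1) := by
            congr 1
            simp only [M]
            omega
        _ ≤ (D - 1).descFactorial (k - 1) := pow_sub_le_descFactorial _ _
        _ = (k - 1)! * (D - 1).choose (k - 1) := descFactorial_eq_factorial_mul_choose _ _
        _ ≤ (k - 1)! * (k ! * p) := Nat.mul_le_mul_left _ (h hkD)
        _ = (k - 1)! * k ! * p := (Nat.mul_assoc _ _ _).symm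
  calc D ^ (k - 1) ≤ (2 * k * M) ^ (k - 1) := Nat.pow_le_pow_left hDM _
    _ = (2 * k) ^ (k - 1) * M ^ (k - 1) := Nat.mul_pow _ _ _
    _ ≤ (2 * k) ^ (k - 1) * ((k - 1)! * k ! * p) := Nat.mul_le_mul_left _ hM
    _ = _ := (Nat.mul_assoc _ _ _).symm

theorem Real.log_natCast_le_of_le_two_pow {n D : ℕ} (h : n ≤ 2 ^ D) : Real.log n ≤ D := by
  rcases Nat.eq_zero_or_pos n with rfl | hn
  · simp
  calc Real.log n ≤ Real.log ((2 : ℝ) ^ D) :=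
        Real.log_le_log (by exact_mod_cast hn) (by exact_mod_cast h)
    _ = D * Real.log 2 := Real.log_pow _ _
    _ ≤ D * 1 := by
        gcongr
        linarith [Real.log_le_sub_one_of_pos (two_pos : (0 : ℝ) < 2)]
    _ = D := mul_one _

end

/-- for every `k ≥ 2` there is a constant `c_k > 0` such that every finite
connected graph `G` on `n` vertices (with at least `k` edges) satisfies
`P(G,k) ≥ c_k (log n)^(k-1)`. -/
theorem P_k_ge_log_pow (k : ℕ) (hk : 2 ≤ k) :
    ∃ c : ℝ, 0 < c ∧ ∀ (V : Type) [Fintype V] (G : SimpleGraph V),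
      G.Connected → k ≤ G.edgeSet.ncard →
      c * (Real.log (Fintype.card V)) ^ (k - 1) ≤ (P G k : ℝ) := by
  set N : ℕ := (2 * k) ^ (k - 1) * ((k - 1).factorial * k.factorial)
  have hN : (0 : ℝ) < N := by positivity
  refine ⟨N⁻¹, inv_pos.2 hN, fun V _ G hG hkE => ?_⟩
  obtain ⟨L, hL, hcard⟩ := G.exists_isConnChain (G.induceUnivIso.connected_iff.2 hG)
    (Set.mem_univ hG.nonempty.some)
  rw [G.edgesIn_univ] at hL
  rw [Set.ncard_univ, Nat.card_eq_fintype_card] at hcard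
  have hD : L.length ^ (k - 1) ≤ N * P G k :=
    pow_le_of_choose_le (by omega) (one_le_P hG (by omega) hkE) fun hkL =>
      (choose_le_ncard_connSizeTuples hL.1 hL.2.1 (by omega) hkL).trans
        (ncard_connSizeTuples_le G k)
  calc (N : ℝ)⁻¹ * Real.log (Fintype.card V) ^ (k - 1)
      ≤ (N : ℝ)⁻¹ * (L.length : ℝ) ^ (k - 1) := by
        gcongr
        exact Real.log_natCast_le_of_le_two_pow hcard
    _ ≤ (N : ℝ)⁻¹ * (N * P G k) := by
        gcongr
        exact_mod_cast hD
    _ = P G k := by field_simp
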